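/- arXiv:1002.2733 — 4 statements merged into one kernel-verified Lean document; each statement's English description precedes it below -/
import Mathlib

section
/- Let H be a separable complex Hilbert space, and for each t ∈ ℝ and n ∈ ℕ let T(t) and Tₙ(t) be self-adjoint operators in H. Suppose that for each n ∈ ℕ the family {Tₙ(t)}_{t∈ℝ} is N-measurable, and that for a.e. t ∈ ℝ the operators Tₙ(t) converge to T(t) in the weak resolvent sense, i.e., for every z ∈ ℂ∖ℝ and all f, g ∈ H, ⟨f, (Tₙ(t) − zI)^{−1} g⟩_H → ⟨f, (T(t) − zI)^{−1} g⟩_H as n → ∞. Then the family {T(t)}_{t∈ℝ} is N-measurable. -/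
open MeasureTheory

noncomputable section

variable {H : Type*} [NormedAddCommGroup H] [InnerProductSpace ℂ H]

/-- A family of vectors `g : ℝ → H` is weakly (Lebesgue) measurable if `t ↦ ⟪h, g t⟫` is
Lebesgue measurable for every `h ∈ H`. -/
def WeakMeasVec (g : ℝ → H) : Prop :=
  ∀ h : H, AEMeasurable (fun t : ℝ => (inner ℂ h (g t) : ℂ)) volume

/-- A family of bounded operators `A : ℝ → B(H)` is weakly measurable. -/
def WeakMeasOp (A : ℝ → H →L[ℂ] H) : Prop :=
  ∀ h k : H, AEMeasurable (fun t : ℝ => (inner ℂ h (A t k) : ℂ)) volume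

/-- A family of (in general unbounded) linear operators in `H` is weakly measurable if it
maps weakly measurable families of vectors in the domains to weakly measurable families. -/
def WeakMeasFam (T : ℝ → (H →ₗ.[ℂ] H)) : Prop :=
  ∀ f : (t : ℝ) → (T t).domain,
    WeakMeasVec (fun t => (f t : H)) → WeakMeasVec (fun t => T t (f t))

/-- `P` is the characteristic matrix of `T`: the `2 × 2` block operator matrix of the
orthogonal projection of `H ⊕ H` onto the graph of `T`. -/
def IsCharMatrix (T : H →ₗ.[ℂ] H) (P : Fin 2 → Fin 2 → (H →L[ℂ] H)) : Prop :=
  (∀ x y : H, (P 0 0 x + P 0 1 y, P 1 0 x + P 1 1 y) ∈ T.graph) ∧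
  (∀ x y : H, ∀ u : T.domain,
    (inner ℂ (x - (P 0 0 x + P 0 1 y)) (u : H) : ℂ)
      + (inner ℂ (y - (P 1 0 x + P 1 1 y)) (T u) : ℂ) = 0)

/-- N-measurability of a family of densely defined closed operators: the entries of the
characteristic matrices form weakly measurable families of bounded operators. -/
def NMeas (T : ℝ → (H →ₗ.[ℂ] H)) : Prop :=
  ∃ P : ℝ → Fin 2 → Fin 2 → (H →L[ℂ] H),
    (∀ t, IsCharMatrix (T t) (P t)) ∧ ∀ j k : Fin 2, WeakMeasOp (fun t => P t j k)

/-- `R = (T - z I)⁻¹ ∈ B(H)`, i.e. `z` lies in the resolvent set of `T` with resolvent `R`. -/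
def IsResolvent (T : H →ₗ.[ℂ] H) (z : ℂ) (R : H →L[ℂ] H) : Prop :=
  (∀ x : H, ∃ hx : R x ∈ T.domain, T ⟨R x, hx⟩ - z • R x = x) ∧
  (∀ y : T.domain, R (T y - z • (y : H)) = (y : H))

/-- `B = (T⋆ T + I)⁻¹ ∈ B(H)`. -/
def IsInvTstarTAddI [CompleteSpace H] (T : H →ₗ.[ℂ] H) (B : H →L[ℂ] H) : Prop :=
  ∀ x : H, ∃ (h1 : B x ∈ T.domain) (h2 : T ⟨B x, h1⟩ ∈ T.adjoint.domain),
    T.adjoint ⟨T ⟨B x, h1⟩, h2⟩ + B x = x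

/-- `C = T B`. -/
def IsTComp (T : H →ₗ.[ℂ] H) (B C : H →L[ℂ] H) : Prop :=
  ∀ x : H, ∃ h1 : B x ∈ T.domain, T ⟨B x, h1⟩ = C x

/-- `D = (T T⋆ + I)⁻¹ ∈ B(H)`. -/
def IsInvTTstarAddI [CompleteSpace H] (T : H →ₗ.[ℂ] H) (D : H →L[ℂ] H) : Prop :=
  ∀ x : H, ∃ (h1 : D x ∈ T.adjoint.domain) (h2 : T.adjoint ⟨D x, h1⟩ ∈ T.domain),
    T ⟨T.adjoint ⟨D x, h1⟩, h2⟩ + D x = x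

/-- `T` is a symmetric operator. -/
def IsSymmPMap (T : H →ₗ.[ℂ] H) : Prop :=
  ∀ x y : T.domain, (inner ℂ (x : H) (T y) : ℂ) = inner ℂ (T x) (y : H)

/-- `T` is an unbounded operator. -/
def UnboundedPMap (T : H →ₗ.[ℂ] H) : Prop :=
  ¬ ∃ C : ℝ, ∀ x : T.domain, ‖T x‖ ≤ C * ‖(x : H)‖

/-! For self-adjoint `T` the characteristic matrix is
`[[(1 + T²)⁻¹, T (1 + T²)⁻¹], [T (1 + T²)⁻¹, 1 - (1 + T²)⁻¹]]`, and
`(T ∓ i)⁻¹ = T (1 + T²)⁻¹ ± i (1 + T²)⁻¹`. So every entry is a linear combination of the identity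
and the resolvents at `±i`. The resolvents of `T(t)` are a.e. weak limits of those of `Tₙ(t)`,
which are weakly measurable because the characteristic matrices of `Tₙ(t)` are; pointwise a.e.
limits of measurable functions are measurable. -/

namespace WeakMeasOp

variable {A B C : ℝ → H →L[ℂ] H}

theorem add (hA : WeakMeasOp A) (hB : WeakMeasOp B) : WeakMeasOp fun t => A t + B t :=
  fun h k => by simp only [add_apply, inner_add_right]; exact (hA h k).add (hB h k)

theorem const_smul (c : ℂ) (hA : WeakMeasOp A) : WeakMeasOp fun t => c • A t :=
  fun h k => by simp only [smul_apply, inner_smul_right]; exact (hA h k).const_mul c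

theorem sub (hA : WeakMeasOp A) (hB : WeakMeasOp B) : WeakMeasOp fun t => A t - B t := by
  simpa only [sub_eq_add_neg, ← neg_one_smul ℂ (B _)] using hA.add (hB.const_smul (-1))

theorem const (A : H →L[ℂ] H) : WeakMeasOp fun _ => A :=
  fun _ _ => aemeasurable_const

theorem of_tendsto {An : ℕ → ℝ → H →L[ℂ] H} (hAn : ∀ n, WeakMeasOp (An n))
    (hlim : ∀ᵐ t, ∀ h k : H,
      Filter.Tendsto (fun n => inner ℂ h (An n t k)) Filter.atTop (nhds (inner ℂ h (A t k)))) :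
    WeakMeasOp A := fun h k =>
  aemeasurable_of_tendsto_metrizable_ae Filter.atTop (fun n => hAn n h k)
    (hlim.mono fun _ ht => ht h k)

theorem of_add_smul_I (hp : WeakMeasOp fun t => C t + Complex.I • B t)
    (hm : WeakMeasOp fun t => C t + (-Complex.I) • B t) : WeakMeasOp B ∧ WeakMeasOp C := by
  have two_I : (2 * Complex.I : ℂ) ≠ 0 := by simp
  refine ⟨?_, ?_⟩
  · convert (hp.sub hm).const_smul (2 * Complex.I)⁻¹ using 2 with t
    rw [show C t + Complex.I • B t - (C t + (-Complex.I) • B t) = (2 * Complex.I) • B t by module,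
      smul_smul, inv_mul_cancel₀ two_I, one_smul]
  · convert (hp.add hm).const_smul (2 : ℂ)⁻¹ using 2 with t
    rw [show C t + Complex.I • B t + (C t + (-Complex.I) • B t) = (2 : ℂ) • C t by module,
      smul_smul, inv_mul_cancel₀ two_ne_zero, one_smul]

end WeakMeasOp

section SelfAdjoint

variable [CompleteSpace H] {T : H →ₗ.[ℂ] H}

theorem IsSelfAdjoint.mem_graph_iff_inner (hT : IsSelfAdjoint T) {c d : H} :
    (c, d) ∈ T.graph ↔ ∀ a b, (a, b) ∈ T.graph → inner ℂ b c = inner ℂ a d := by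
  conv_lhs => rw [← LinearPMap.isSelfAdjoint_def.mp hT,
    LinearPMap.adjoint_graph_eq_graph_adjoint hT.dense_domain]
  simp only [Submodule.mem_adjoint_iff, sub_eq_zero]

theorem IsSelfAdjoint.eq_zero_of_mem_graph_smul (hT : IsSelfAdjoint T) {z : ℂ} (hz : z.im ≠ 0)
    {w : H} (hw : (w, z • w) ∈ T.graph) : w = 0 := by
  have h := (hT.mem_graph_iff_inner.mp hw) w (z • w) hw
  rw [inner_smul_left, inner_smul_right] at h
  have hconj : starRingEnd ℂ z ≠ z := fun h' => hz (Complex.conj_eq_iff_im.mp h')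
  exact inner_self_eq_zero.mp ((mul_eq_mul_right_iff.mp h).resolve_left hconj)

theorem IsSelfAdjoint.isResolvent_of_mem_graph (hT : IsSelfAdjoint T) {z : ℂ} (hz : z.im ≠ 0)
    {R : H →L[ℂ] H} (hR : ∀ x, (R x, x + z • R x) ∈ T.graph) : IsResolvent T z R := by
  have hdom x : R x ∈ T.domain := LinearPMap.mem_domain_of_mem_graph (hR x)
  have happly x : T ⟨R x, hdom x⟩ = x + z • R x := ((LinearPMap.image_iff (hdom x)).mpr (hR x)).symm
  refine ⟨fun x => ⟨hdom x, by rw [happly, add_sub_cancel_right]⟩, fun y => ?_⟩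
  set x := T y - z • (y : H)
  have hker : (R x - y, z • (R x - y)) ∈ T.graph := by
    convert T.graph.sub_mem (hR x) (T.mem_graph y) using 1
    simp only [x, Prod.mk_sub_mk, smul_sub]
    congr 1
    abel
  exact sub_eq_zero.mp (hT.eq_zero_of_mem_graph_smul hz hker)

end SelfAdjoint

/-- `B = (1 + T²)⁻¹` and `C = T (1 + T²)⁻¹`, so that `C + z B = (T - z)⁻¹` when `z² = -1`. -/
structure IsOneAddSqInvPair (T : H →ₗ.[ℂ] H) (B C : H →L[ℂ] H) : Prop where
  mem_graph_fst : ∀ x, (B x, C x) ∈ T.graph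
  mem_graph_snd : ∀ x, (C x, x - B x) ∈ T.graph

theorem Complex.im_ne_zero_of_mul_self_eq_neg_one {z : ℂ} (hz : z * z = -1) : z.im ≠ 0 :=
  fun him => by
    have := congrArg Complex.re hz
    simp only [Complex.mul_re, him, mul_zero, sub_zero, Complex.neg_re, Complex.one_re] at this
    nlinarith [mul_self_nonneg z.re]

theorem IsOneAddSqInvPair.isResolvent [CompleteSpace H] {T : H →ₗ.[ℂ] H} {B C : H →L[ℂ] H}
    (hp : IsOneAddSqInvPair T B C) (hT : IsSelfAdjoint T) {z : ℂ} (hz : z * z = -1) :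
    IsResolvent T z (C + z • B) := by
  refine hT.isResolvent_of_mem_graph (Complex.im_ne_zero_of_mul_self_eq_neg_one hz) fun x => ?_
  convert T.graph.add_mem (hp.mem_graph_snd x) (T.graph.smul_mem z (hp.mem_graph_fst x)) using 1
  simp only [add_apply, smul_apply, Prod.smul_mk, Prod.mk_add_mk, smul_add, smul_smul, hz]
  congr 1; module

namespace IsCharMatrix

variable {T : H →ₗ.[ℂ] H} {P : Fin 2 → Fin 2 → (H →L[ℂ] H)}

theorem inner_add_inner_eq_zero (hP : IsCharMatrix T P) (x y : H) {a b : H}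
    (hab : (a, b) ∈ T.graph) :
    inner ℂ a (x - (P 0 0 x + P 0 1 y)) + inner ℂ b (y - (P 1 0 x + P 1 1 y)) = 0 := by
  obtain ⟨u, rfl, rfl⟩ := T.mem_graph_iff.mp hab
  simpa [inner_conj_symm] using congrArg (starRingEnd ℂ) (hP.2 x y u)

theorem isOneAddSqInvPair_col_zero [CompleteSpace H] (hP : IsCharMatrix T P)
    (hT : IsSelfAdjoint T) :
    IsOneAddSqInvPair T (P 0 0) (P 1 0) := by
  refine ⟨fun x => by simpa using hP.1 x 0, fun x => hT.mem_graph_iff_inner.mpr fun a b hab => ?_⟩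
  have h := hP.inner_add_inner_eq_zero x 0 hab
  simp only [map_zero, add_zero, zero_sub, inner_neg_right] at h
  linear_combination -h

theorem isOneAddSqInvPair_col_one [CompleteSpace H] (hP : IsCharMatrix T P)
    (hT : IsSelfAdjoint T) :
    IsOneAddSqInvPair T (1 - P 1 1) (P 0 1) := by
  refine ⟨fun y => hT.mem_graph_iff_inner.mpr fun a b hab => ?_, fun y => by simpa using hP.1 0 y⟩
  have h := hP.inner_add_inner_eq_zero 0 y hab
  simp only [map_zero, zero_add, zero_sub, inner_neg_right] at h
  simp only [sub_apply, one_apply_eq_self]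
  linear_combination h

end IsCharMatrix

theorem LinearPMap.IsClosed.exists_isCharMatrix [CompleteSpace H] {T : H →ₗ.[ℂ] H}
    (hT : T.IsClosed) : ∃ P, IsCharMatrix T P := by
  let e := WithLp.prodContinuousLinearEquiv 2 ℂ H H
  let G : Submodule ℂ (WithLp 2 (H × H)) := T.graph.comap (e : WithLp 2 (H × H) →ₗ[ℂ] H × H)
  have : CompleteSpace G := (hT.preimage e.continuous).completeSpace_coe
  let Q : H × H →L[ℂ] H × H := (e : WithLp 2 (H × H) →L[ℂ] H × H) ∘L G.starProjection ∘L
    (e.symm : H × H →L[ℂ] WithLp 2 (H × H))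
  let P : Fin 2 → Fin 2 → (H →L[ℂ] H) :=
    ![![.fst ℂ H H ∘L Q ∘L .inl ℂ H H, .fst ℂ H H ∘L Q ∘L .inr ℂ H H],
      ![.snd ℂ H H ∘L Q ∘L .inl ℂ H H, .snd ℂ H H ∘L Q ∘L .inr ℂ H H]]
  have hPQ (x y : H) : (P 0 0 x + P 0 1 y, P 1 0 x + P 1 1 y) = Q (x, y) := by
    have hxy : ((x, y) : H × H) =
        ContinuousLinearMap.inl ℂ H H x + ContinuousLinearMap.inr ℂ H H y := by simp
    rw [hxy, Q.map_add]
    rfl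
  refine ⟨P, fun x y => hPQ x y ▸ G.starProjection_apply_mem _, fun x y u => ?_⟩
  have hperp := Submodule.sub_starProjection_mem_orthogonal (K := G) (e.symm (x, y))
  have hu : e.symm (u, T u) ∈ G := by simp [G]
  have h := (Submodule.mem_orthogonal' _ _).mp hperp _ hu
  rw [WithLp.prod_inner_apply] at h
  obtain ⟨h1, h2⟩ := Prod.ext_iff.mp (hPQ x y)
  dsimp only at h1 h2
  rw [h1, h2]
  exact h

theorem stmt_4_general {H : Type*} [NormedAddCommGroup H] [InnerProductSpace ℂ H]
    [CompleteSpace H]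
    (T : ℝ → (H →ₗ.[ℂ] H)) (Tn : ℕ → ℝ → (H →ₗ.[ℂ] H))
    (hsaT : ∀ t, IsSelfAdjoint (T t)) (hsaTn : ∀ n t, IsSelfAdjoint (Tn n t))
    (hN : ∀ n, NMeas (Tn n))
    (hconv : ∀ᵐ t ∂(volume : Measure ℝ), ∀ z : ℂ, z.im ≠ 0 →
      ∀ (Rn : ℕ → (H →L[ℂ] H)) (R : H →L[ℂ] H),
        (∀ n, IsResolvent (Tn n t) z (Rn n)) → IsResolvent (T t) z R →
          ∀ f g : H,
            Filter.Tendsto (fun n : ℕ => (inner ℂ f (Rn n g) : ℂ)) Filter.atTop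
              (nhds (inner ℂ f (R g) : ℂ))) :
    NMeas T := by
  choose Pn hPn hPnMeas using hN
  choose P hP using fun t => (hsaT t).isClosed.exists_isCharMatrix
  refine ⟨P, hP, ?_⟩
  have hres (z : ℂ) (hz : z * z = -1) (B C : ℝ → H →L[ℂ] H)
      (hBC : ∀ t, IsOneAddSqInvPair (T t) (B t) (C t)) : WeakMeasOp fun t => C t + z • B t := by
    refine WeakMeasOp.of_tendsto (fun n => (hPnMeas n 1 0).add ((hPnMeas n 0 0).const_smul z)) ?_
    filter_upwards [hconv] with t ht
    exact ht z (Complex.im_ne_zero_of_mul_self_eq_neg_one hz) _ _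
      (fun n => ((hPn n t).isOneAddSqInvPair_col_zero (hsaTn n t)).isResolvent (hsaTn n t) hz)
      ((hBC t).isResolvent (hsaT t) hz)
  have hpair (B C : ℝ → H →L[ℂ] H) (hBC : ∀ t, IsOneAddSqInvPair (T t) (B t) (C t)) :
      WeakMeasOp B ∧ WeakMeasOp C :=
    WeakMeasOp.of_add_smul_I (hres _ Complex.I_mul_I B C hBC) (hres (-Complex.I) (by simp) B C hBC)
  obtain ⟨h00, h10⟩ := hpair _ _ fun t => (hP t).isOneAddSqInvPair_col_zero (hsaT t)
  obtain ⟨h11, h01⟩ := hpair _ _ fun t => (hP t).isOneAddSqInvPair_col_one (hsaT t)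
  intro j k
  fin_cases j <;> fin_cases k
  · exact h00
  · exact h01
  · exact h10
  · simpa using (WeakMeasOp.const 1).sub h11

/-- If self-adjoint families `{Tₙ t}` are N-measurable and, for a.e. `t`,
`Tₙ t → T t` in the weak resolvent sense, then the self-adjoint family `{T t}` is N-measurable. -/
theorem stmt_4 {H : Type*} [NormedAddCommGroup H] [InnerProductSpace ℂ H]
    [CompleteSpace H] [TopologicalSpace.SeparableSpace H]
    (T : ℝ → (H →ₗ.[ℂ] H)) (Tn : ℕ → ℝ → (H →ₗ.[ℂ] H))
    (hsaT : ∀ t, IsSelfAdjoint (T t)) (hsaTn : ∀ n t, IsSelfAdjoint (Tn n t))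
    (hN : ∀ n, NMeas (Tn n))
    (hconv : ∀ᵐ t ∂(volume : Measure ℝ), ∀ z : ℂ, z.im ≠ 0 →
      ∀ (Rn : ℕ → (H →L[ℂ] H)) (R : H →L[ℂ] H),
        (∀ n, IsResolvent (Tn n t) z (Rn n)) → IsResolvent (T t) z R →
          ∀ f g : H,
            Filter.Tendsto (fun n : ℕ => (inner ℂ f (Rn n g) : ℂ)) Filter.atTop
              (nhds (inner ℂ f (R g) : ℂ))) :
    NMeas T :=
  stmt_4_general T Tn hsaT hsaTn hN hconv
end
end

section
/- Let H be a separable complex Hilbert space and let {T(t)}_{t∈ℝ} be a family of densely defined closed linear operators in H. For each t ∈ ℝ let B(t), C(t), D(t) ∈ B(H) be the bounded operators with B(t) = (T(t)*T(t) + I)^{−1} (i.e., for every x ∈ H, B(t)x ∈ dom(T(t)), T(t)B(t)x ∈ dom(T(t)*), and T(t)*T(t)B(t)x + B(t)x = x), C(t) = T(t)B(t), and D(t) = (T(t)T(t)* + I)^{−1} (i.e., for every x ∈ H, D(t)x ∈ dom(T(t)*), T(t)*D(t)x ∈ dom(T(t)), and T(t)T(t)*D(t)x + D(t)x = x). Then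 the family {T(t)}_{t∈ℝ} is N-measurable if and only if the three families {B(t)}_{t∈ℝ}, {C(t)}_{t∈ℝ}, and {D(t)}_{t∈ℝ} are weakly measurable. -/
open MeasureTheory

noncomputable section

variable {H : Type*} [NormedAddCommGroup H] [InnerProductSpace ℂ H]

/-!
The characteristic matrix of a densely defined operator is unique: the difference of two
candidates maps `(x, y)` to a vector of the graph that is orthogonal to the graph. For `T` it is
`[[B, C†], [C, 1 - D]]`, where `C† = T† D` follows from the defining identities of `B`, `C`, `D` and
the adjoint relation between the graphs of `T` and `T†`. Hence N-measurability means weak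
measurability of `B`, `C†`, `C` and `1 - D`, and `C†` is weakly measurable whenever `C` is.
-/

open scoped LinearPMap InnerProduct

namespace LinearPMap

variable {𝕜 E F : Type*} [RCLike 𝕜] [NormedAddCommGroup E] [InnerProductSpace 𝕜 E]
  [NormedAddCommGroup F] [InnerProductSpace 𝕜 F]

theorem eq_zero_of_mem_graph_of_forall_inner_eq_zero {T : E →ₗ.[𝕜] F} {a : E} {b : F}
    (hab : (a, b) ∈ T.graph) (horth : ∀ u : T.domain, inner 𝕜 a (u : E) + inner 𝕜 b (T u) = 0) :
    a = 0 ∧ b = 0 := by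
  obtain ⟨u, rfl, rfl⟩ := T.mem_graph_iff.mp hab
  have hsum : ‖(u : E)‖ ^ 2 + ‖T u‖ ^ 2 = 0 := by
    simpa [inner_self_eq_norm_sq] using congrArg RCLike.re (horth u)
  constructor <;> rw [← norm_eq_zero] <;> nlinarith [sq_nonneg ‖(u : E)‖, sq_nonneg ‖T u‖]

theorem inner_eq_of_mem_graph_of_mem_adjoint_graph [CompleteSpace E] {T : E →ₗ.[𝕜] F}
    (hT : Dense (T.domain : Set E)) {a : E} {b : F} {c : F} {d : E}
    (hab : (a, b) ∈ T.graph) (hcd : (c, d) ∈ T†.graph) :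
    inner 𝕜 b c = inner 𝕜 a d := by
  rw [T.adjoint_graph_eq_graph_adjoint hT, Submodule.mem_adjoint_iff] at hcd
  exact sub_eq_zero.mp (hcd a b hab)

end LinearPMap

theorem IsCharMatrix.unique {T : H →ₗ.[ℂ] H} {P Q : Fin 2 → Fin 2 → (H →L[ℂ] H)}
    (hP : IsCharMatrix T P) (hQ : IsCharMatrix T Q) : P = Q := by
  have hrows : ∀ x y : H, P 0 0 x + P 0 1 y = Q 0 0 x + Q 0 1 y ∧
      P 1 0 x + P 1 1 y = Q 1 0 x + Q 1 1 y := by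
    intro x y
    have hmem := T.graph.sub_mem (hP.1 x y) (hQ.1 x y)
    have key := LinearPMap.eq_zero_of_mem_graph_of_forall_inner_eq_zero hmem fun u => by
      have hPu := hP.2 x y u
      have hQu := hQ.2 x y u
      simp only [inner_sub_left] at hPu hQu ⊢
      linear_combination hQu - hPu
    exact ⟨sub_eq_zero.mp key.1, sub_eq_zero.mp key.2⟩
  ext j k x
  have hx0 := hrows x 0
  have h0x := hrows 0 x
  simp only [map_zero, add_zero, zero_add] at hx0 h0x
  fin_cases j <;> fin_cases k <;> simp [hx0, h0x]

section Inverses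

variable [CompleteSpace H] {T : H →ₗ.[ℂ] H} {B C D : H →L[ℂ] H}

omit [CompleteSpace H] in
theorem IsTComp.mem_graph (hC : IsTComp T B C) (x : H) : (B x, C x) ∈ T.graph :=
  let ⟨hBx, hTBx⟩ := hC x
  T.mem_graph_iff.mpr ⟨⟨B x, hBx⟩, rfl, hTBx⟩

theorem IsInvTstarTAddI.mem_adjoint_graph (hB : IsInvTstarTAddI T B) (hC : IsTComp T B C)
    (x : H) : (C x, x - B x) ∈ T†.graph := by
  obtain ⟨hBx, hTBx, hx⟩ := hB x
  obtain ⟨_, hCx⟩ := hC x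
  exact (T†).mem_graph_iff.mpr ⟨⟨_, hTBx⟩, hCx, eq_sub_of_add_eq hx⟩

theorem IsInvTTstarAddI.exists_mem_graph (hD : IsInvTTstarAddI T D) (y : H) :
    ∃ w, (D y, w) ∈ T†.graph ∧ (w, y - D y) ∈ T.graph := by
  obtain ⟨hDy, hTDy, hy⟩ := hD y
  exact ⟨_, (T†).mem_graph ⟨_, hDy⟩, T.mem_graph_iff.mpr ⟨⟨_, hTDy⟩, rfl, eq_sub_of_add_eq hy⟩⟩

/-- This is `C† = T† D`: pair `T† D y` with `z = T†(T B z) + B z` and move `T`, `T†` across. -/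
theorem IsTComp.adjoint_apply_mem_graph (hT : Dense (T.domain : Set H))
    (hB : IsInvTstarTAddI T B) (hC : IsTComp T B C) (hD : IsInvTTstarAddI T D) (y : H) :
    (D y, (C†) y) ∈ T†.graph ∧ ((C†) y, y - D y) ∈ T.graph := by
  obtain ⟨w, hDw, hwy⟩ := hD.exists_mem_graph y
  suffices (C†) y = w from this ▸ ⟨hDw, hwy⟩
  refine ext_inner_left ℂ fun z => ?_
  have h₁ := LinearPMap.inner_eq_of_mem_graph_of_mem_adjoint_graph hT (hC.mem_graph z) hDw
  have h₂ := LinearPMap.inner_eq_of_mem_graph_of_mem_adjoint_graph hT hwy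
    (hB.mem_adjoint_graph hC z)
  calc inner ℂ z ((C†) y) = inner ℂ (C z) (y - D y) + inner ℂ (C z) (D y) := by
        rw [ContinuousLinearMap.adjoint_inner_right, ← inner_add_right, sub_add_cancel]
    _ = inner ℂ (z - B z) w + inner ℂ (B z) w := by
        rw [← h₁, ← inner_conj_symm, h₂, inner_conj_symm]
    _ = inner ℂ z w := by rw [← inner_add_left, sub_add_cancel]

def charMatrixOf (B C D : H →L[ℂ] H) : Fin 2 → Fin 2 → (H →L[ℂ] H) :=
  ![![B, C†], ![C, 1 - D]]

theorem isCharMatrix_charMatrixOf (hT : Dense (T.domain : Set H))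
    (hB : IsInvTstarTAddI T B) (hC : IsTComp T B C) (hD : IsInvTTstarAddI T D) :
    IsCharMatrix T (charMatrixOf B C D) := by
  simp only [IsCharMatrix, charMatrixOf, Matrix.cons_val_zero, Matrix.cons_val_one,
    sub_apply, one_apply_eq_self]
  refine ⟨fun x y => T.graph.add_mem (hC.mem_graph x)
    (hC.adjoint_apply_mem_graph hT hB hD y).2, fun x y u => ?_⟩
  have hCx := LinearPMap.inner_eq_of_mem_graph_of_mem_adjoint_graph hT (T.mem_graph u)
    (hB.mem_adjoint_graph hC x)
  have hDy := LinearPMap.inner_eq_of_mem_graph_of_mem_adjoint_graph hT (T.mem_graph u)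
    (hC.adjoint_apply_mem_graph hT hB hD y).1
  rw [← inner_conj_symm, ← inner_conj_symm (y - _), ← map_add, map_eq_zero]
  simp only [inner_sub_right, inner_add_right, hCx, hDy]
  ring

end Inverses

theorem WeakMeasOp.adjoint [CompleteSpace H] {A : ℝ → H →L[ℂ] H} (hA : WeakMeasOp A) :
    WeakMeasOp fun t => (A t)† := by
  intro h k
  simp_rw [ContinuousLinearMap.adjoint_inner_right, ← inner_conj_symm (A _ h)]
  exact Complex.continuous_conj.measurable.comp_aemeasurable (hA k h)

theorem WeakMeasOp.one_sub {A : ℝ → H →L[ℂ] H} (hA : WeakMeasOp A) :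
    WeakMeasOp fun t => 1 - A t := by
  intro h k
  simp_rw [sub_apply, one_apply_eq_self, inner_sub_right]
  exact aemeasurable_const.sub (hA h k)

theorem weakMeasOp_one_sub_iff {A : ℝ → H →L[ℂ] H} :
    WeakMeasOp (fun t => 1 - A t) ↔ WeakMeasOp A :=
  ⟨fun h => by simpa using h.one_sub, WeakMeasOp.one_sub⟩

theorem weakMeasOp_charMatrixOf_iff [CompleteSpace H] {B C D : ℝ → H →L[ℂ] H} :
    (∀ j k, WeakMeasOp fun t => charMatrixOf (B t) (C t) (D t) j k) ↔
      WeakMeasOp B ∧ WeakMeasOp C ∧ WeakMeasOp D := by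
  simp only [Fin.forall_fin_two, charMatrixOf, Matrix.cons_val_zero, Matrix.cons_val_one,
    weakMeasOp_one_sub_iff]
  exact ⟨fun h => ⟨h.1.1, h.2.1, h.2.2⟩, fun h => ⟨⟨h.1, h.2.1.adjoint⟩, h.2.1, h.2.2⟩⟩

theorem nMeas_iff_of_isCharMatrix {T : ℝ → (H →ₗ.[ℂ] H)}
    {P : ℝ → Fin 2 → Fin 2 → (H →L[ℂ] H)}
    (hP : ∀ t, IsCharMatrix (T t) (P t)) :
    NMeas T ↔ ∀ j k, WeakMeasOp fun t => P t j k := by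
  refine ⟨fun ⟨Q, hQ, hQm⟩ => ?_, fun h => ⟨P, hP, h⟩⟩
  simpa only [funext fun t => (hQ t).unique (hP t)] using hQm

theorem stmt_5_general {H : Type*} [NormedAddCommGroup H] [InnerProductSpace ℂ H]
    [CompleteSpace H]
    (T : ℝ → (H →ₗ.[ℂ] H))
    (hdense : ∀ t, Dense ((T t).domain : Set H))
    (B C D : ℝ → (H →L[ℂ] H))
    (hB : ∀ t, IsInvTstarTAddI (T t) (B t))
    (hC : ∀ t, IsTComp (T t) (B t) (C t))
    (hD : ∀ t, IsInvTTstarAddI (T t) (D t)) :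
    NMeas T ↔ (WeakMeasOp B ∧ WeakMeasOp C ∧ WeakMeasOp D) := by
  rw [nMeas_iff_of_isCharMatrix fun t =>
    isCharMatrix_charMatrixOf (hdense t) (hB t) (hC t) (hD t), weakMeasOp_charMatrixOf_iff]

/-- `{T t}` is N-measurable iff the three families
`B t = (T t⋆ T t + I)⁻¹`, `C t = T t • B t` and `D t = (T t T t⋆ + I)⁻¹` are weakly measurable. -/
theorem stmt_5 {H : Type*} [NormedAddCommGroup H] [InnerProductSpace ℂ H]
    [CompleteSpace H] [TopologicalSpace.SeparableSpace H]
    (T : ℝ → (H →ₗ.[ℂ] H))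
    (hdense : ∀ t, Dense ((T t).domain : Set H)) (hclosed : ∀ t, (T t).IsClosed)
    (B C D : ℝ → (H →L[ℂ] H))
    (hB : ∀ t, IsInvTstarTAddI (T t) (B t))
    (hC : ∀ t, IsTComp (T t) (B t) (C t))
    (hD : ∀ t, IsInvTTstarAddI (T t) (D t)) :
    NMeas T ↔ (WeakMeasOp B ∧ WeakMeasOp C ∧ WeakMeasOp D) :=
  stmt_5_general T hdense B C D hB hC hD

end
end

section
/- Let H be a separable complex Hilbert space, let A₀ be a densely defined closed symmetric operator in H, let A₁ be a self-adjoint extension of A₀, and let e ∈ dom(A₀*) be a unit vector with A₀* e = i e. Set T₁ = A₁ + iI with dom(T₁) = dom(A₁), K = I + ⟨e,·⟩_H e ∈ B(H), and T₂ = K T₁ with dom(T₂) = dom(T₁). Then dom(T₁*) ∩ dom(T₂*) = {g ∈ dom(T₁*) : ⟨e, g⟩_H = 0}; in particular, the closure of dom(T₁*) ∩ dom(T₂*) has codimension one in H. -/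
open MeasureTheory

noncomputable section

variable {H : Type*} [NormedAddCommGroup H] [InnerProductSpace ℂ H]

/-! Since `A₁` is self-adjoint, `dom T₁* = dom A₁`, and since `K` is bounded and self-adjoint,
`dom T₂* = K⁻¹ (dom A₁)`. A self-adjoint operator has no non-real eigenvalues, so `A₁ ⊆ A₀*` and
`A₀* e = i e` force `e ∉ dom A₁`; hence for `g ∈ dom A₁`, `K g = g + ⟪e, g⟫ e ∈ dom A₁` only if
`⟪e, g⟫ = 0`. The intersection is thus the dense subspace `dom A₁` cut by the closed hyperplane
`e⊥`, and its closure is `e⊥`. -/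

open scoped InnerProductSpace ComplexConjugate LinearPMap

section Codimension

variable {𝕜 E : Type*} [NontriviallyNormedField 𝕜] [AddCommGroup E] [TopologicalSpace E]
  [IsTopologicalAddGroup E] [Module 𝕜 E] [ContinuousSMul 𝕜 E]

theorem Dense.topologicalClosure_inf_ker {D : Submodule 𝕜 E} (hD : Dense (D : Set E))
    (φ : E →L[𝕜] 𝕜) : (D ⊓ φ.ker).topologicalClosure = φ.ker := by
  by_cases hφ : φ = 0
  · subst hφ
    simpa using (D.dense_iff_topologicalClosure_eq_top).mp hD
  obtain ⟨d, hdD, hd⟩ : ∃ d ∈ D, φ d ≠ 0 :=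
    hD.exists_mem_open (isOpen_ne_fun φ.continuous continuous_const) (DFunLike.ne_iff.mp hφ)
  refine le_antisymm (Submodule.topologicalClosure_minimal _ inf_le_right φ.isClosed_ker) ?_
  intro x hx
  -- the projection along `d` onto `ker φ` fixes `x` and maps `D` into `D ⊓ ker φ`
  let P : E → E := fun y => y - (φ y / φ d) • d
  have hPx : P x = x := by simp [P, show φ x = 0 from hx]
  have hPD : Set.MapsTo P D (D ⊓ φ.ker) := fun y hy =>
    ⟨D.sub_mem hy (D.smul_mem _ hdD), by simp [P, div_mul_cancel₀ _ hd]⟩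
  rw [← SetLike.mem_coe, Submodule.topologicalClosure_coe, ← hPx]
  exact map_mem_closure (by fun_prop) (hD x) hPD

end Codimension

theorem Module.Dual.finrank_quotient_ker_of_ne_zero {K V : Type*} [Field K] [AddCommGroup V]
    [Module K V] {f : Module.Dual K V} (hf : f ≠ 0) :
    Module.finrank K (V ⧸ LinearMap.ker f) = 1 := by
  rw [f.quotKerEquivRange.finrank_eq, range_eq_top_of_ne_zero hf, finrank_top,
    Module.finrank_self]

theorem Submodule.add_smul_mem_iff_of_notMem {K V : Type*} [DivisionRing K] [AddCommGroup V]
    [Module K V] {S : Submodule K V} {g e : V} (hg : g ∈ S) (he : e ∉ S) (c : K) :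
    g + c • e ∈ S ↔ c = 0 := by
  rw [S.add_mem_iff_right hg]
  refine ⟨fun h => by_contra fun hc => he ((S.smul_mem_iff hc).mp h), fun hc => ?_⟩
  simp [hc]

namespace LinearPMap

variable {𝕜 E F : Type*} [RCLike 𝕜] [NormedAddCommGroup E] [InnerProductSpace 𝕜 E]
  [NormedAddCommGroup F] [InnerProductSpace 𝕜 F] [CompleteSpace E]

theorem mem_adjoint_domain_of_eq_add_smul {A T : E →ₗ.[𝕜] E} (hA : Dense (A.domain : Set E))
    (hdom : T.domain = A.domain) (c : 𝕜)
    (hT : ∀ (x : E) (hx : x ∈ T.domain) (hx' : x ∈ A.domain), T ⟨x, hx⟩ = A ⟨x, hx'⟩ + c • x)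
    {y : E} (hy : y ∈ A†.domain) : y ∈ T†.domain := by
  refine mem_adjoint_domain_of_exists y ⟨A† ⟨y, hy⟩ + conj c • y, fun ⟨x, hx⟩ => ?_⟩
  rw [hT x hx (hdom ▸ hx), inner_add_left, inner_add_right, inner_smul_left, inner_smul_right,
    RCLike.conj_conj, adjoint_isFormalAdjoint hA ⟨y, hy⟩ ⟨x, hdom ▸ hx⟩]

theorem mem_adjoint_domain_iff_of_eq_add_smul {A T : E →ₗ.[𝕜] E} (hA : Dense (A.domain : Set E))
    (hdom : T.domain = A.domain) (c : 𝕜)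
    (hT : ∀ (x : E) (hx : x ∈ T.domain) (hx' : x ∈ A.domain), T ⟨x, hx⟩ = A ⟨x, hx'⟩ + c • x)
    (y : E) : y ∈ T†.domain ↔ y ∈ A†.domain := by
  refine ⟨mem_adjoint_domain_of_eq_add_smul (hdom ▸ hA) hdom.symm (-c) fun x hx hx' => ?_,
    mem_adjoint_domain_of_eq_add_smul hA hdom c hT⟩
  rw [hT x hx' hx, neg_smul, add_neg_cancel_right]

theorem mem_adjoint_domain_iff_of_eq_comp [CompleteSpace F] {T S : E →ₗ.[𝕜] F}
    (hT : Dense (T.domain : Set E)) (K : F →L[𝕜] F) (hdom : S.domain = T.domain)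
    (hS : ∀ (x : E) (hx : x ∈ S.domain) (hx' : x ∈ T.domain), S ⟨x, hx⟩ = K (T ⟨x, hx'⟩))
    (y : F) : y ∈ S†.domain ↔ K.adjoint y ∈ T†.domain := by
  constructor
  · intro hy
    refine mem_adjoint_domain_of_exists _ ⟨S† ⟨y, hy⟩, fun ⟨x, hx⟩ => ?_⟩
    rw [adjoint_isFormalAdjoint (hdom ▸ hT) ⟨y, hy⟩ ⟨x, hdom ▸ hx⟩, hS x _ hx,
      ContinuousLinearMap.adjoint_inner_left]
  · intro hy
    refine mem_adjoint_domain_of_exists _ ⟨T† ⟨_, hy⟩, fun ⟨x, hx⟩ => ?_⟩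
    rw [adjoint_isFormalAdjoint hT ⟨_, hy⟩ ⟨x, hdom ▸ hx⟩, hS x hx _,
      ContinuousLinearMap.adjoint_inner_left]

end LinearPMap

namespace IsSelfAdjoint

variable {𝕜 E : Type*} [RCLike 𝕜] [NormedAddCommGroup E] [InnerProductSpace 𝕜 E]
  [CompleteSpace E] {A : E →ₗ.[𝕜] E}

theorem isFormalAdjoint_self (hA : IsSelfAdjoint A) : A.IsFormalAdjoint A := by
  have h := LinearPMap.adjoint_isFormalAdjoint hA.dense_domain
  rwa [LinearPMap.isSelfAdjoint_def.mp hA] at h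

theorem conj_eq_of_apply_eq_smul (hA : IsSelfAdjoint A) {x : A.domain} (hx : (x : E) ≠ 0)
    {c : 𝕜} (h : A x = c • (x : E)) : conj c = c := by
  have hsymm := hA.isFormalAdjoint_self x x
  rw [h, inner_smul_left, inner_smul_right] at hsymm
  exact mul_right_cancel₀ (inner_self_ne_zero.mpr hx) hsymm

theorem le_adjoint_of_le (hA : IsSelfAdjoint A) {A₀ : E →ₗ.[𝕜] E}
    (hA₀ : Dense (A₀.domain : Set E)) (hle : A₀ ≤ A) : A ≤ A₀† :=
  LinearPMap.IsFormalAdjoint.le_adjoint hA₀ fun x y => by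
    rw [hle.2 (y := ⟨x, hle.1 x.2⟩) rfl]
    exact hA.isFormalAdjoint_self _ y

end IsSelfAdjoint

theorem stmt_11_general {H : Type*} [NormedAddCommGroup H] [InnerProductSpace ℂ H]
    [CompleteSpace H]
    (A₀ A₁ : H →ₗ.[ℂ] H)
    (hd₀ : Dense (A₀.domain : Set H))
    (hext : A₀ ≤ A₁) (hsa₁ : IsSelfAdjoint A₁)
    (e : H) (he : ‖e‖ = 1)
    (hedom : e ∈ A₀.adjoint.domain)
    (heeq : A₀.adjoint ⟨e, hedom⟩ = Complex.I • e)
    (T₁ : H →ₗ.[ℂ] H) (hT₁dom : T₁.domain = A₁.domain)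
    (hT₁ : ∀ (x : H) (hx : x ∈ T₁.domain) (hx' : x ∈ A₁.domain),
      T₁ ⟨x, hx⟩ = A₁ ⟨x, hx'⟩ + Complex.I • x)
    (K : H →L[ℂ] H) (hK : ∀ x : H, K x = x + (inner ℂ e x : ℂ) • e)
    (T₂ : H →ₗ.[ℂ] H) (hT₂dom : T₂.domain = T₁.domain)
    (hT₂ : ∀ (x : H) (hx : x ∈ T₂.domain) (hx' : x ∈ T₁.domain),
      T₂ ⟨x, hx⟩ = K (T₁ ⟨x, hx'⟩)) :
    ((T₁.adjoint.domain ⊓ T₂.adjoint.domain : Submodule ℂ H) : Set H)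
        = {g : H | g ∈ T₁.adjoint.domain ∧ (inner ℂ e g : ℂ) = 0} ∧
      Module.finrank ℂ
        (H ⧸ (T₁.adjoint.domain ⊓ T₂.adjoint.domain).topologicalClosure) = 1 := by
  have he₀ : e ≠ 0 := norm_ne_zero_iff.mp (he ▸ one_ne_zero)
  have he_notMem : e ∉ A₁.domain := fun heA₁ => by
    have hAe : A₁ ⟨e, heA₁⟩ = Complex.I • e := by
      rw [← heeq, (hsa₁.le_adjoint_of_le hd₀ hext).2 (y := ⟨e, hedom⟩) rfl]
    have := hsa₁.conj_eq_of_apply_eq_smul he₀ hAe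
    norm_num [Complex.ext_iff] at this
  have hT₁adj : ∀ g, g ∈ T₁†.domain ↔ g ∈ A₁.domain := fun g => by
    rw [LinearPMap.mem_adjoint_domain_iff_of_eq_add_smul hsa₁.dense_domain hT₁dom _ hT₁,
      LinearPMap.isSelfAdjoint_def.mp hsa₁]
  have hK_adjoint : K.adjoint = K := by
    refine ContinuousLinearMap.isSelfAdjoint_iff'.mp
      (ContinuousLinearMap.isSelfAdjoint_iff_isSymmetric.mpr fun x y => ?_)
    simp only [ContinuousLinearMap.coe_coe, hK, inner_add_left, inner_add_right,
      inner_smul_left, inner_smul_right, inner_conj_symm]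
    ring
  have hT₂adj : ∀ g, g ∈ T₂†.domain ↔ K g ∈ T₁†.domain := fun g => by
    rw [LinearPMap.mem_adjoint_domain_iff_of_eq_comp (hT₁dom ▸ hsa₁.dense_domain) K hT₂dom hT₂,
      hK_adjoint]
  have hdom : T₁†.domain ⊓ T₂†.domain = A₁.domain ⊓ (innerSL ℂ e).ker := by
    ext g
    rw [Submodule.mem_inf, Submodule.mem_inf, hT₂adj, hT₁adj, hT₁adj, hK,
      and_congr_right_iff]
    exact fun hg => Submodule.add_smul_mem_iff_of_notMem hg he_notMem _
  refine ⟨?_, ?_⟩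
  · ext g
    simp [hdom, hT₁adj]
  · rw [hdom, hsa₁.dense_domain.topologicalClosure_inf_ker]
    exact Module.Dual.finrank_quotient_ker_of_ne_zero
      (DFunLike.ne_iff.mpr ⟨e, by simpa using he₀⟩)

/-- In the setting of Example 4.2 (Statement 10),
`dom T₁⋆ ∩ dom T₂⋆ = {g ∈ dom T₁⋆ : ⟪e, g⟫ = 0}`; in particular the closure of
`dom T₁⋆ ∩ dom T₂⋆` has codimension one in `H`. -/
theorem stmt_11 {H : Type*} [NormedAddCommGroup H] [InnerProductSpace ℂ H]
    [CompleteSpace H] [TopologicalSpace.SeparableSpace H]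
    (A₀ A₁ : H →ₗ.[ℂ] H)
    (hd₀ : Dense (A₀.domain : Set H)) (hc₀ : A₀.IsClosed) (hs₀ : IsSymmPMap A₀)
    (hext : A₀ ≤ A₁) (hsa₁ : IsSelfAdjoint A₁)
    (e : H) (he : ‖e‖ = 1)
    (hedom : e ∈ A₀.adjoint.domain)
    (heeq : A₀.adjoint ⟨e, hedom⟩ = Complex.I • e)
    (T₁ : H →ₗ.[ℂ] H) (hT₁dom : T₁.domain = A₁.domain)
    (hT₁ : ∀ (x : H) (hx : x ∈ T₁.domain) (hx' : x ∈ A₁.domain),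
      T₁ ⟨x, hx⟩ = A₁ ⟨x, hx'⟩ + Complex.I • x)
    (K : H →L[ℂ] H) (hK : ∀ x : H, K x = x + (inner ℂ e x : ℂ) • e)
    (T₂ : H →ₗ.[ℂ] H) (hT₂dom : T₂.domain = T₁.domain)
    (hT₂ : ∀ (x : H) (hx : x ∈ T₂.domain) (hx' : x ∈ T₁.domain),
      T₂ ⟨x, hx⟩ = K (T₁ ⟨x, hx'⟩)) :
    ((T₁.adjoint.domain ⊓ T₂.adjoint.domain : Submodule ℂ H) : Set H)
        = {g : H | g ∈ T₁.adjoint.domain ∧ (inner ℂ e g : ℂ) = 0} ∧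
      Module.finrank ℂ
        (H ⧸ (T₁.adjoint.domain ⊓ T₂.adjoint.domain).topologicalClosure) = 1 :=
  stmt_11_general A₀ A₁ hd₀ hext hsa₁ e he hedom heeq T₁ hT₁dom hT₁ K hK T₂ hT₂dom hT₂

end
end

section
/- Let H be a separable complex Hilbert space and let {T(t)}_{t∈ℝ} be a weakly measurable family of densely defined closed linear operators in H. Suppose in addition that ∩_{t∈ℝ} dom(T(t)) is dense in H. Then the family of adjoints {T(t)*}_{t∈ℝ} is weakly measurable. -/
/-!
For `h` in the common domain, `⟪h, T(t)⋆ f(t)⟫ = ⟪T(t) h, f(t)⟫` is the inner product of two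
weakly measurable families, which is measurable by Parseval's identity in a Hilbert basis
(countable by separability). A general `h` is a limit of such vectors, and a pointwise limit of
measurable functions is measurable.
-/

open MeasureTheory

noncomputable section

variable {H : Type*} [NormedAddCommGroup H] [InnerProductSpace ℂ H]

open Metric in
lemma Orthonormal.countable {𝕜 E ι : Type*} [RCLike 𝕜] [NormedAddCommGroup E]
    [InnerProductSpace 𝕜 E] [TopologicalSpace.SeparableSpace E] {v : ι → E}
    (hv : Orthonormal 𝕜 v) : Countable ι := by
  refine Pairwise.countable_of_isOpen_disjoint (s := fun i => ball (v i) (1 / 2))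
    (fun i j hij => ball_disjoint_ball ?_) (fun _ => isOpen_ball)
    (fun _ => nonempty_ball.2 one_half_pos)
  have hsq : ‖v i - v j‖ ^ 2 = 2 := by
    rw [@norm_sub_sq 𝕜, hv.2 hij, hv.1 i, hv.1 j]
    norm_num
  rw [dist_eq_norm]
  nlinarith [norm_nonneg (v i - v j)]

lemma WeakMeasVec.aemeasurable_inner [CompleteSpace H] [TopologicalSpace.SeparableSpace H]
    {g f : ℝ → H} (hg : WeakMeasVec g) (hf : WeakMeasVec f) :
    AEMeasurable (fun t => (inner ℂ (g t) (f t) : ℂ)) volume := by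
  obtain ⟨w, b, -⟩ := exists_hilbertBasis ℂ H
  have : Countable w := b.orthonormal.countable
  have hcoord : ∀ i, AEMeasurable (fun t => (inner ℂ (g t) (b i) : ℂ)) volume := fun i => by
    simpa only [Function.comp_def, inner_conj_symm] using
      Complex.continuous_conj.measurable.comp_aemeasurable (hg (b i))
  refine aemeasurable_of_tendsto_metrizable_ae Filter.atTop
    (f := fun s : Finset w => fun t => ∑ i ∈ s, inner ℂ (g t) (b i) * inner ℂ (b i) (f t))
    (fun s => Finset.aemeasurable_fun_sum s fun i _ => (hcoord i).mul (hf (b i))) ?_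
  exact Filter.Eventually.of_forall fun t => b.hasSum_inner_mul_inner (g t) (f t)

lemma weakMeasVec_const (h : H) : WeakMeasVec fun _ : ℝ => h :=
  fun _ => aemeasurable_const

lemma WeakMeasVec.of_dense {S : Set H} (hS : Dense S) {g : ℝ → H}
    (hg : ∀ h ∈ S, AEMeasurable (fun t => (inner ℂ h (g t) : ℂ)) volume) :
    WeakMeasVec g := by
  intro h
  obtain ⟨u, hu, hlim⟩ := mem_closure_iff_seq_limit.1 (hS h)
  exact aemeasurable_of_tendsto_metrizable_ae' (fun n => hg (u n) (hu n))
    (Filter.Eventually.of_forall fun t => hlim.inner tendsto_const_nhds)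

lemma LinearPMap.inner_adjoint_apply {𝕜 E F : Type*} [RCLike 𝕜] [NormedAddCommGroup E]
    [InnerProductSpace 𝕜 E] [NormedAddCommGroup F] [InnerProductSpace 𝕜 F] [CompleteSpace E]
    {T : E →ₗ.[𝕜] F} (hT : Dense (T.domain : Set E)) (x : T.domain) (y : T.adjoint.domain) :
    inner 𝕜 (x : E) (T.adjoint y) = inner 𝕜 (T x) (y : F) :=
  ((adjoint_isFormalAdjoint hT).symm x y).symm

theorem stmt_12_general {H : Type*} [NormedAddCommGroup H] [InnerProductSpace ℂ H]
    [CompleteSpace H] [TopologicalSpace.SeparableSpace H]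
    (T : ℝ → (H →ₗ.[ℂ] H))
    (hdense : ∀ t, Dense ((T t).domain : Set H))
    (hmeas : WeakMeasFam T)
    (hint : Dense (⋂ t : ℝ, ((T t).domain : Set H))) :
    WeakMeasFam (fun t => (T t).adjoint) := by
  intro f hf
  refine WeakMeasVec.of_dense hint fun h hh => ?_
  have hdom : ∀ t, h ∈ (T t).domain := Set.mem_iInter.1 hh
  have hTh : WeakMeasVec (fun t => T t ⟨h, hdom t⟩) :=
    hmeas (fun t => ⟨h, hdom t⟩) (weakMeasVec_const h)
  convert hTh.aemeasurable_inner hf using 2 with t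
  exact LinearPMap.inner_adjoint_apply (hdense t) ⟨h, hdom t⟩ (f t)

/-- If a weakly measurable family of densely defined closed operators has
`⋂_t dom (T t)` dense, then the adjoint family is weakly measurable. -/
theorem stmt_12 {H : Type*} [NormedAddCommGroup H] [InnerProductSpace ℂ H]
    [CompleteSpace H] [TopologicalSpace.SeparableSpace H]
    (T : ℝ → (H →ₗ.[ℂ] H))
    (hdense : ∀ t, Dense ((T t).domain : Set H)) (hclosed : ∀ t, (T t).IsClosed)
    (hmeas : WeakMeasFam T)
    (hint : Dense (⋂ t : ℝ, ((T t).domain : Set H))) :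
    WeakMeasFam (fun t => (T t).adjoint) :=
  stmt_12_general T hdense hmeas hint

end
end
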